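/- (Theorem 1, equivariance of the degree-routing SOVNET layer.) Let G be a finite group, f_i : Fin d → G → ℝ for i ∈ Fin N input capsule functions, and Ψ^p : Fin d → G → ℝ for p ∈ Fin d' filters. Define predictions S_i(g) ∈ EuclideanSpace ℝ (Fin d') by S_i(g) p = (f_i ⋆ Ψ^p)(g); assume S_i(g) ≠ 0 for every i and g, and assume the same for the predictions S_i^u computed from the shifted inputs L_u f_i. Define Degree_i(g) = ∑_{k : Fin N} ⟪S_i(g), S_k(g)⟫/(‖S_i(g)‖‖S_k(g)‖), c_i(g) = exp(Degree_i(g))/∑_{k} exp(Degree_k(g)), and the layer output F(g) = squash(∑_{i} c_i(g) • S_i(g)) where squash(v) = (‖v‖/(1 + ‖v‖²)) • v. Then for every u ∈ G, the layer output F^u computed from the inputs L_u f_i satisfies F^u(g) = F(u⁻¹ * g) for all g ∈ G; i.e. the degree-routing layer Φ satisfies Φ(L_u F^l) = L_u Φ(F^l). -/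

import Mathlib

open scoped RealInnerProductSpace BigOperators

/-- The shift operator `(L_u φ)(g) = φ(u⁻¹ * g)`. -/
def shift {G : Type*} [Group G] {X : Type*} (u : G) (φ : G → X) : G → X :=
  fun g => φ (u⁻¹ * g)

/-- The group correlation `(f ⋆ Ψ)(g) = ∑_{h ∈ G} ∑_{k : Fin d} f k h * Ψ k (g⁻¹ * h)`. -/
noncomputable def groupCorr {G : Type*} [Group G] [Fintype G] {d : ℕ}
    (f : Fin d → G → ℝ) (Ψ : Fin d → G → ℝ) : G → ℝ :=
  fun g => ∑ h : G, ∑ k : Fin d, f k h * Ψ k (g⁻¹ * h)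

/-- The squash nonlinearity `squash(v) = (‖v‖/(1 + ‖v‖²)) • v`. -/
noncomputable def squash {n : ℕ} (v : EuclideanSpace ℝ (Fin n)) : EuclideanSpace ℝ (Fin n) :=
  (‖v‖ / (1 + ‖v‖ ^ 2)) • v

/-- The prediction `S_i(g) p = (f_i ⋆ Ψ^p)(g)` for the deeper capsule, made from input capsules
`f_i` by group-equivariant correlation with the filters `Ψ^p`. -/
noncomputable def sovPredict {G : Type*} [Group G] [Fintype G] {N dIn dOut : ℕ}
    (f : Fin N → Fin dIn → G → ℝ) (Ψ : Fin dOut → Fin dIn → G → ℝ)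
    (i : Fin N) (g : G) : EuclideanSpace ℝ (Fin dOut) :=
  WithLp.toLp 2 (fun p => groupCorr (f i) (Ψ p) g)

/-- `Degree_i(g) = ∑_{k} ⟪S_i(g), S_k(g)⟫/(‖S_i(g)‖ ‖S_k(g)‖)`. -/
noncomputable def sovDegree {G : Type*} [Group G] [Fintype G] {N dIn dOut : ℕ}
    (f : Fin N → Fin dIn → G → ℝ) (Ψ : Fin dOut → Fin dIn → G → ℝ)
    (i : Fin N) (g : G) : ℝ :=
  ∑ k : Fin N,
    ⟪sovPredict f Ψ i g, sovPredict f Ψ k g⟫ /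
      (‖sovPredict f Ψ i g‖ * ‖sovPredict f Ψ k g‖)

/-- The routing coefficients `c_i(g) = exp(Degree_i(g))/∑_k exp(Degree_k(g))`. -/
noncomputable def sovCoeff {G : Type*} [Group G] [Fintype G] {N dIn dOut : ℕ}
    (f : Fin N → Fin dIn → G → ℝ) (Ψ : Fin dOut → Fin dIn → G → ℝ)
    (i : Fin N) (g : G) : ℝ :=
  Real.exp (sovDegree f Ψ i g) / ∑ k : Fin N, Real.exp (sovDegree f Ψ k g)

/-- The degree-routing SOVNET layer output `F(g) = squash(∑_i c_i(g) • S_i(g))`. -/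
noncomputable def sovLayer {G : Type*} [Group G] [Fintype G] {N dIn dOut : ℕ}
    (f : Fin N → Fin dIn → G → ℝ) (Ψ : Fin dOut → Fin dIn → G → ℝ)
    (g : G) : EuclideanSpace ℝ (Fin dOut) :=
  squash (∑ i : Fin N, sovCoeff f Ψ i g • sovPredict f Ψ i g)

/-!
Shifting the inputs shifts every prediction: `S^u_i(g) = S_i(u⁻¹ g)`, because the group
correlation commutes with left translation (substitute `h ↦ u h` in the sum over `G`).
Degree routing, the coefficients and the squash act pointwise in `g`, on the family
`(S_i(g))_i` alone, so the layer output inherits the shift.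
-/

theorem groupCorr_shift {G : Type*} [Group G] [Fintype G] {d : ℕ}
    (f Ψ : Fin d → G → ℝ) (u g : G) :
    groupCorr (fun k => shift u (f k)) Ψ g = groupCorr f Ψ (u⁻¹ * g) := by
  refine Fintype.sum_equiv (Equiv.mulLeft u⁻¹) _ _ fun h => ?_
  simp [shift, mul_assoc]

theorem sovPredict_shift {G : Type*} [Group G] [Fintype G] {N dIn dOut : ℕ}
    (f : Fin N → Fin dIn → G → ℝ) (Ψ : Fin dOut → Fin dIn → G → ℝ) (u : G) (i : Fin N) (g : G) :
    sovPredict (fun i' k => shift u (f i' k)) Ψ i g = sovPredict f Ψ i (u⁻¹ * g) := by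
  ext p
  exact groupCorr_shift (f i) (Ψ p) u g

section Routing

variable {G : Type*} [Group G] [Fintype G] {N dIn dOut : ℕ}
  {f f' : Fin N → Fin dIn → G → ℝ} {Ψ : Fin dOut → Fin dIn → G → ℝ} {g g' : G}

theorem sovDegree_congr (h : ∀ i, sovPredict f Ψ i g = sovPredict f' Ψ i g') (i : Fin N) :
    sovDegree f Ψ i g = sovDegree f' Ψ i g' := by
  simp only [sovDegree, h]

theorem sovCoeff_congr (h : ∀ i, sovPredict f Ψ i g = sovPredict f' Ψ i g') (i : Fin N) :
    sovCoeff f Ψ i g = sovCoeff f' Ψ i g' := by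
  simp only [sovCoeff, sovDegree_congr h]

theorem sovLayer_congr (h : ∀ i, sovPredict f Ψ i g = sovPredict f' Ψ i g') :
    sovLayer f Ψ g = sovLayer f' Ψ g' := by
  simp only [sovLayer, sovCoeff_congr h, h]

end Routing

theorem sovLayer_equivariant_general {G : Type*} [Group G] [Fintype G] {N dIn dOut : ℕ}
    (f : Fin N → Fin dIn → G → ℝ) (Ψ : Fin dOut → Fin dIn → G → ℝ) :
    ∀ (u g : G),
      sovLayer (fun i' k => shift u (f i' k)) Ψ g = sovLayer f Ψ (u⁻¹ * g) := by
  intro u g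
  exact sovLayer_congr (sovPredict_shift f Ψ u · g)

/-- Theorem 1: the degree-routing SOVNET layer is equivariant: the layer output `F^u` computed
from the shifted inputs `L_u f_i` satisfies `F^u(g) = F(u⁻¹ * g)`, i.e.
`Φ(L_u F^l) = L_u Φ(F^l)`. -/
theorem sovLayer_equivariant {G : Type*} [Group G] [Fintype G] {N dIn dOut : ℕ}
    (f : Fin N → Fin dIn → G → ℝ) (Ψ : Fin dOut → Fin dIn → G → ℝ)
    (hNZ : ∀ (i : Fin N) (g : G), sovPredict f Ψ i g ≠ 0)
    (hNZ' : ∀ (u : G) (i : Fin N) (g : G),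
      sovPredict (fun i' k => shift u (f i' k)) Ψ i g ≠ 0) :
    ∀ (u g : G),
      sovLayer (fun i' k => shift u (f i' k)) Ψ g = sovLayer f Ψ (u⁻¹ * g) :=
  sovLayer_equivariant_general f Ψ
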